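/- arXiv:2112.08678 — 3 statements merged into one kernel-verified Lean document; each statement's English description precedes it below -/
import Mathlib

section
/- Let 𝔠 = {C^0,…,C^{M−1}} be an (M,M,N)-complete complementary code with sequences c^k_m of length N, let ω = exp(2πi/M) and f_{i,j} = ω^{i·j}, and for 0 ≤ k ≤ M−1 let B̃_k be the length-M²N sequence whose entry at position i·MN + j·N + n equals f_{i,j} · c^j_{k,n}. Then for all 0 ≤ k1 ≠ k2 ≤ M−1, the periodic cross-correlation satisfies R_{B̃_{k1}, B̃_{k2}}(τ) = 0 for all 0 ≤ τ ≤ (M−1)N. -/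
/-!
Split a position of `B̃_k` as `i·MN + j·N + r`. In the periodic correlation, the row index `i`
enters only through the phases `ω^(i·j)·conj(ω^(i·j'))`, where `j'` is the column block reached
after the shift; summing over `i` is the orthogonality of `M`-th roots of unity, which kills every
term with `j ≢ j' (mod M)`. Because `τ ≤ (M-1)·N`, this leaves exactly the terms with `r + τ < N`,
so the correlation is `M · ∑_j C_{c^j_{k1}, c^j_{k2}}(τ)`, an aperiodic correlation of the
transposed code. The transpose of a CCC is again a CCC: with `A(z)` the `M × M` matrix of
generating Laurent polynomials of the sequences, the CCC property reads
`A(z) · A(z⁻¹)^* = MN · I`, and a one-sided inverse of a square matrix over a commutative ring is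
two-sided.
-/
open Finset

/-- Aperiodic cross-correlation of length-`L` complex sequences at shift `0 ≤ τ`. -/
noncomputable def aCorr (a b : ℕ → ℂ) (L τ : ℕ) : ℂ :=
  ∑ k ∈ Finset.range (L - τ), a k * (starRingEnd ℂ) (b (k + τ))

/-- Periodic cross-correlation of length-`L` complex sequences at shift `τ`. -/
noncomputable def pCorr (a b : ℕ → ℂ) (L τ : ℕ) : ℂ :=
  ∑ k ∈ Finset.range L, a k * (starRingEnd ℂ) (b ((k + τ) % L))

/-- For an `(M,M,N)`-CCC with sequences `c k m` (set `k`, member `m`), the length-`M²N`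
sequence `B̃ k` whose entry at position `i·MN + j·N + n` is `ω^(i·j) · c j k n`,
where `ω = exp(2πi/M)`. -/
noncomputable def Bseq (M N : ℕ) (c : ℕ → ℕ → ℕ → ℂ) (k : ℕ) : ℕ → ℂ :=
  fun n =>
    Complex.exp (2 * Real.pi * Complex.I * ((n / (M * N) : ℕ) : ℂ) *
        (((n % (M * N)) / N : ℕ) : ℂ) / (M : ℂ)) *
      c ((n % (M * N)) / N) k (n % N)

open ComplexConjugate

theorem Finset.sum_range_mul_eq_sum_sum {β : Type*} [AddCommMonoid β] (f : ℕ → β) (a b : ℕ) :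
    ∑ n ∈ range (a * b), f n = ∑ i ∈ range a, ∑ r ∈ range b, f (i * b + r) := by
  induction a with
  | zero => simp
  | succ a ih => rw [Nat.succ_mul, sum_range_add, ih, sum_range_succ]

theorem aCorr_eq_sum_ite (a b : ℕ → ℂ) (L τ : ℕ) :
    aCorr a b L τ = ∑ k ∈ range L, if k + τ < L then a k * conj (b (k + τ)) else 0 := by
  rw [aCorr, ← sum_filter]
  congr 1
  ext k
  simp only [mem_range, mem_filter]
  omega

theorem aCorr_eq_zero_of_le (a b : ℕ → ℂ) {L τ : ℕ} (h : L ≤ τ) : aCorr a b L τ = 0 := by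
  simp [aCorr, Nat.sub_eq_zero_of_le h]

theorem pCorr_eq_of_periodic (a : ℕ → ℂ) {b : ℕ → ℂ} {L : ℕ} (hb : Function.Periodic b L)
    (τ : ℕ) : pCorr a b L τ = ∑ k ∈ range L, a k * conj (b (k + τ)) := by
  simp only [pCorr, hb.map_mod_nat]

theorem IsPrimitiveRoot.sum_pow_mul_conj_pow {ζ : ℂ} {M : ℕ} (hζ : IsPrimitiveRoot ζ M)
    (a b : ℕ) :
    ∑ i ∈ range M, ζ ^ (i * a) * conj (ζ ^ (i * b)) = if a ≡ b [MOD M] then (M : ℂ) else 0 := by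
  rcases Nat.eq_zero_or_pos M with rfl | hM
  · simp
  have hconj : conj ζ = ζ⁻¹ :=
    (Complex.inv_eq_conj (Complex.norm_eq_one_of_pow_eq_one hζ.pow_eq_one hM.ne')).symm
  set x := ζ ^ a * (ζ ^ b)⁻¹ with hx
  have hterm : ∀ i : ℕ, ζ ^ (i * a) * conj (ζ ^ (i * b)) = x ^ i := fun i => by
    rw [map_pow, hconj, hx, mul_pow, inv_pow, inv_pow, ← pow_mul, ← pow_mul, mul_comm a,
      mul_comm b]
  have hζ0 : ζ ≠ 0 := hζ.ne_zero hM.ne'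
  have hx1 : x = 1 ↔ a ≡ b [MOD M] := by
    rw [hx, mul_inv_eq_one₀ (pow_ne_zero _ hζ0), hζ.eq_orderOf,
      (hζ.isOfFinOrder hM.ne').pow_eq_pow_iff_modEq]
  simp only [hterm]
  split_ifs with hab
  · simp [hx1.mpr hab]
  · have hxM : x ^ M = 1 := by
      rw [hx, mul_pow, inv_pow, ← pow_mul, ← pow_mul, mul_comm a, mul_comm b, pow_mul, pow_mul,
        hζ.pow_eq_one]
      simp
    rw [geom_sum_eq (mt hx1.mp hab), hxM, sub_self, zero_div]

theorem Matrix.mul_eq_smul_one_comm {n K R : Type*} [Fintype n] [DecidableEq n] [Field K]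
    [CommRing R] [Algebra K R] {A B : Matrix n n R} {s : K} (hs : s ≠ 0) (h : A * B = s • 1) :
    B * A = s • 1 := by
  have hinv : A * (s⁻¹ • B) = 1 := by
    rw [Matrix.mul_smul, h, smul_smul, inv_mul_cancel₀ hs, one_smul]
  have hinv' := mul_eq_one_comm.mp hinv
  rw [Matrix.smul_mul] at hinv'
  calc B * A = s • s⁻¹ • (B * A) := by rw [smul_smul, mul_inv_cancel₀ hs, one_smul]
    _ = s • 1 := by rw [hinv']

section Laurent

open AddMonoidAlgebra LaurentPolynomial

noncomputable def laurent (N : ℕ) (a : ℕ → ℂ) : ℂ[T;T⁻¹] :=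
  ∑ n ∈ range N, single (n : ℤ) (a n)

noncomputable def conjRevLaurent (N : ℕ) (a : ℕ → ℂ) : ℂ[T;T⁻¹] :=
  ∑ n ∈ range N, single (-(n : ℤ)) (conj (a n))

variable {N : ℕ} (a b : ℕ → ℂ)

theorem coeff_laurent_mul_conjRevLaurent (d : ℤ) :
    (laurent N a * conjRevLaurent N b).coeff d =
      ∑ n ∈ range N, ∑ n' ∈ range N, if (n : ℤ) - n' = d then a n * conj (b n') else 0 := by
  simp only [laurent, conjRevLaurent, sum_mul_sum, single_mul_single, coeff_sum,
    Finset.sum_apply', coeff_single, Finsupp.single_apply, sub_eq_add_neg]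

theorem coeff_laurent_mul_conjRevLaurent_neg (τ : ℕ) :
    (laurent N a * conjRevLaurent N b).coeff (-τ) = aCorr a b N τ := by
  rw [coeff_laurent_mul_conjRevLaurent, aCorr_eq_sum_ite]
  refine sum_congr rfl fun n _ => ?_
  have hshift : ∀ n' : ℕ, ((n : ℤ) - n' = -τ ↔ n + τ = n') := by omega
  simp only [hshift, sum_ite_eq, mem_range]

theorem coeff_laurent_mul_conjRevLaurent_comm (d : ℤ) :
    (laurent N a * conjRevLaurent N b).coeff d =
      conj ((laurent N b * conjRevLaurent N a).coeff (-d)) := by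
  simp only [coeff_laurent_mul_conjRevLaurent, map_sum, apply_ite, map_mul, Complex.conj_conj,
    map_zero]
  rw [sum_comm]
  exact sum_congr rfl fun n _ => sum_congr rfl fun n' _ =>
    if_congr (by omega) (mul_comm _ _) rfl

theorem coeff_laurent_mul_conjRevLaurent_natCast (τ : ℕ) :
    (laurent N a * conjRevLaurent N b).coeff τ = conj (aCorr b a N τ) := by
  rw [coeff_laurent_mul_conjRevLaurent_comm, coeff_laurent_mul_conjRevLaurent_neg]

end Laurent

section LaurentMatrix

open AddMonoidAlgebra LaurentPolynomial
open scoped Matrix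

variable (M N : ℕ) (c : ℕ → ℕ → ℕ → ℂ)

noncomputable def laurentMatrix : Matrix (Fin M) (Fin M) ℂ[T;T⁻¹] :=
  Matrix.of fun p m => laurent N (c p m)

noncomputable def conjRevMatrix : Matrix (Fin M) (Fin M) ℂ[T;T⁻¹] :=
  Matrix.of fun m q => conjRevLaurent N (c q m)

theorem coeff_laurentMatrix_mul_conjRevMatrix_apply (p q : Fin M) (d : ℤ) :
    ((laurentMatrix M N c * conjRevMatrix M N c) p q).coeff d =
      ∑ m ∈ range M, (laurent N (c p m) * conjRevLaurent N (c q m)).coeff d := by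
  rw [Matrix.mul_apply, coeff_sum, Finset.sum_apply',
    ← Fin.sum_univ_eq_sum_range (fun m => (laurent N (c p m) * conjRevLaurent N (c q m)).coeff d)]
  rfl

theorem conjRevMatrix_mul_laurentMatrix :
    conjRevMatrix M N c * laurentMatrix M N c =
      (laurentMatrix M N (fun m k => c k m) * conjRevMatrix M N (fun m k => c k m))ᵀ := by
  ext p q
  simp only [Matrix.mul_apply, Matrix.transpose_apply, laurentMatrix, conjRevMatrix,
    Matrix.of_apply, mul_comm]

theorem coeff_smul_one_apply {n R : Type*} [DecidableEq n] [CommSemiring R] (s : R) (p q : n)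
    (d : ℤ) : ((s • 1 : Matrix n n R[T;T⁻¹]) p q).coeff d = if p = q ∧ d = 0 then s else 0 := by
  by_cases hpq : p = q
  · rw [hpq, Matrix.smul_apply, Matrix.one_apply_eq, coeff_smul, one_def, coeff_single,
      Finsupp.smul_apply, Finsupp.single_apply]
    simp [eq_comm]
  · simp [hpq]

end LaurentMatrix

def IsCompleteComplementaryCode (M N : ℕ) (c : ℕ → ℕ → ℕ → ℂ) : Prop :=
  ∀ k1 < M, ∀ k2 < M, ∀ τ < N,
    ∑ m ∈ range M, aCorr (c k1 m) (c k2 m) N τ = if k1 = k2 ∧ τ = 0 then (M * N : ℂ) else 0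

theorem isCompleteComplementaryCode_iff {M N : ℕ} {c : ℕ → ℕ → ℕ → ℂ} (hN : 0 < N) :
    IsCompleteComplementaryCode M N c ↔
      laurentMatrix M N c * conjRevMatrix M N c = (M * N : ℂ) • 1 := by
  constructor
  · intro h
    ext p q d
    rw [coeff_laurentMatrix_mul_conjRevMatrix_apply, coeff_smul_one_apply]
    obtain ⟨τ, rfl | rfl⟩ := Int.eq_nat_or_neg d
    · simp_rw [coeff_laurent_mul_conjRevLaurent_natCast, ← map_sum]
      rcases lt_or_ge τ N with hτ | hτ
      · rw [h q q.isLt p p.isLt τ hτ]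
        simp [apply_ite (starRingEnd ℂ), Fin.val_inj, eq_comm]
      · have hτ0 : τ ≠ 0 := by omega
        simp [aCorr_eq_zero_of_le _ _ hτ, hτ0]
    · simp_rw [coeff_laurent_mul_conjRevLaurent_neg]
      rcases lt_or_ge τ N with hτ | hτ
      · rw [h p p.isLt q q.isLt τ hτ]
        simp [Fin.val_inj]
      · have hτ0 : τ ≠ 0 := by omega
        simp [aCorr_eq_zero_of_le _ _ hτ, hτ0]
  · intro h k1 hk1 k2 hk2 τ hτ
    have hcoeff := congrArg (fun X => (X ⟨k1, hk1⟩ ⟨k2, hk2⟩).coeff (-τ)) h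
    rw [coeff_laurentMatrix_mul_conjRevMatrix_apply, coeff_smul_one_apply] at hcoeff
    simpa [coeff_laurent_mul_conjRevLaurent_neg] using hcoeff

theorem IsCompleteComplementaryCode.transpose {M N : ℕ} {c : ℕ → ℕ → ℕ → ℂ}
    (h : IsCompleteComplementaryCode M N c) :
    IsCompleteComplementaryCode M N (fun m k => c k m) := by
  rcases Nat.eq_zero_or_pos N with rfl | hN
  · exact fun _ _ _ _ τ hτ => absurd hτ τ.not_lt_zero
  rcases Nat.eq_zero_or_pos M with rfl | hM
  · exact fun k1 hk1 => absurd hk1 k1.not_lt_zero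
  have hMN : (M * N : ℂ) ≠ 0 := by
    exact_mod_cast (Nat.mul_pos hM hN).ne'
  rw [isCompleteComplementaryCode_iff hN] at h ⊢
  rw [← Matrix.transpose_transpose (_ * _), ← conjRevMatrix_mul_laurentMatrix,
    Matrix.mul_eq_smul_one_comm hMN h, Matrix.transpose_smul, Matrix.transpose_one]

theorem Nat.div_modEq_add_div_iff {M N j r τ : ℕ} (hM : 0 < M) (hN : 0 < N) (hr : r < N)
    (hτ : τ ≤ (M - 1) * N) : (j * N + r) / N ≡ (j * N + r + τ) / N [MOD M] ↔ r + τ < N := by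
  have hj : (j * N + r) / N = j := by
    rw [mul_comm, Nat.mul_add_div hN, Nat.div_eq_of_lt hr, add_zero]
  have hjτ : (j * N + r + τ) / N = j + (r + τ) / N := by
    rw [add_assoc, mul_comm, Nat.mul_add_div hN]
  have hlt : (r + τ) / N < M := by
    rw [Nat.div_lt_iff_lt_mul hN]
    have : (M - 1) * N + N = M * N := by
      rw [← Nat.succ_mul, Nat.succ_eq_add_one, Nat.sub_add_cancel hM]
    omega
  rw [hj, hjτ, Nat.modEq_iff_dvd' (Nat.le_add_right _ _), Nat.add_sub_cancel_left]
  constructor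
  · intro hdvd
    have := Nat.eq_zero_of_dvd_of_lt hdvd hlt
    rwa [Nat.div_eq_zero_iff_lt hN] at this
  · intro h
    rw [Nat.div_eq_of_lt h]
    exact dvd_zero M

noncomputable def expRoot (M : ℕ) : ℂ := Complex.exp (2 * Real.pi * Complex.I / M)

theorem isPrimitiveRoot_expRoot {M : ℕ} (hM : 0 < M) : IsPrimitiveRoot (expRoot M) M :=
  Complex.isPrimitiveRoot_exp M hM.ne'

section Bseq

variable {M N : ℕ} (c : ℕ → ℕ → ℕ → ℂ) (k : ℕ)

theorem Bseq_eq_expRoot_pow (n : ℕ) :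
    Bseq M N c k n = expRoot M ^ (n / (M * N) * (n % (M * N) / N)) *
      c (n % (M * N) / N) k (n % N) := by
  rw [Bseq, expRoot, ← Complex.exp_nat_mul]
  congr 2
  push_cast
  ring

theorem Bseq_mul_mul_add (hM : 0 < M) (hN : 0 < N) (i m : ℕ) :
    Bseq M N c k (i * (M * N) + m) = expRoot M ^ (i * (m / N)) * Bseq M N c k m := by
  have hdiv : m / N = M * (m / (M * N)) + m % (M * N) / N := by
    conv_lhs => rw [← Nat.div_add_mod m (M * N), mul_comm M N, mul_assoc,
      Nat.mul_add_div hN, mul_comm N M]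
  have hphase : expRoot M ^ (i * (m / N)) = expRoot M ^ (i * (m % (M * N) / N)) := by
    rw [hdiv, mul_add, pow_add, mul_left_comm, pow_mul, (isPrimitiveRoot_expRoot hM).pow_eq_one,
      one_pow, one_mul]
  have hMN : 0 < M * N := Nat.mul_pos hM hN
  have hq : (i * (M * N) + m) / (M * N) = i + m / (M * N) := by
    rw [mul_comm i, Nat.mul_add_div hMN]
  have hs : (i * (M * N) + m) % (M * N) = m % (M * N) := Nat.mul_add_mod_self_right _ _ _
  have hr : (i * (M * N) + m) % N = m % N := by
    rw [show i * (M * N) = (i * M) * N by ring, Nat.mul_add_mod_self_right]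
  rw [Bseq_eq_expRoot_pow, Bseq_eq_expRoot_pow, hphase, hq, hs, hr, add_mul, pow_add, mul_assoc]

theorem Bseq_periodic (hM : 0 < M) (hN : 0 < N) : Function.Periodic (Bseq M N c k) (M ^ 2 * N) :=
  fun m => by
    rw [add_comm, show M ^ 2 * N = M * (M * N) by ring, Bseq_mul_mul_add c k hM hN, pow_mul,
      (isPrimitiveRoot_expRoot hM).pow_eq_one, one_pow, one_mul]

theorem Bseq_mul_add_of_lt (hN : 0 < N) {j r : ℕ} (hj : j < M) (hr : r < N) :
    Bseq M N c k (j * N + r) = c j k r := by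
  have hlt : j * N + r < M * N := by nlinarith
  have hdiv : (j * N + r) / N = j := by
    rw [mul_comm, Nat.mul_add_div hN, Nat.div_eq_of_lt hr, add_zero]
  rw [Bseq_eq_expRoot_pow, Nat.div_eq_of_lt hlt, Nat.mod_eq_of_lt hlt, hdiv, zero_mul, pow_zero,
    one_mul, Nat.mul_add_mod_self_right, Nat.mod_eq_of_lt hr]

theorem pCorr_Bseq (hM : 0 < M) (hN : 0 < N) (k1 k2 : ℕ) {τ : ℕ} (hτ : τ ≤ (M - 1) * N) :
    pCorr (Bseq M N c k1) (Bseq M N c k2) (M ^ 2 * N) τ =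
      M * ∑ j ∈ range M, aCorr (c j k1) (c j k2) N τ := by
  have hblock : ∀ i m, Bseq M N c k1 (i * (M * N) + m) *
      conj (Bseq M N c k2 (i * (M * N) + m + τ)) =
      expRoot M ^ (i * (m / N)) * conj (expRoot M ^ (i * ((m + τ) / N))) *
        (Bseq M N c k1 m * conj (Bseq M N c k2 (m + τ))) := fun i m => by
    rw [add_assoc, Bseq_mul_mul_add c k1 hM hN, Bseq_mul_mul_add c k2 hM hN, map_mul]
    ring
  rw [pCorr_eq_of_periodic _ (Bseq_periodic c k2 hM hN), show M ^ 2 * N = M * (M * N) by ring,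
    sum_range_mul_eq_sum_sum]
  simp_rw [hblock]
  rw [sum_comm]
  simp_rw [← sum_mul, (isPrimitiveRoot_expRoot hM).sum_pow_mul_conj_pow]
  rw [sum_range_mul_eq_sum_sum, mul_sum]
  refine sum_congr rfl fun j hj => ?_
  rw [aCorr_eq_sum_ite, mul_sum]
  refine sum_congr rfl fun r hr => ?_
  rw [mem_range] at hj hr
  simp only [Nat.div_modEq_add_div_iff hM hN hr hτ]
  split_ifs with h
  · rw [Bseq_mul_add_of_lt c k1 hN hj hr, add_assoc, Bseq_mul_add_of_lt c k2 hN hj h]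
  · simp

end Bseq

theorem statement13 (M N : ℕ) (hM : 0 < M) (hN : 0 < N)
    (c : ℕ → ℕ → ℕ → ℂ)
    (hCCC : ∀ k1 < M, ∀ k2 < M, ∀ τ < N,
      ∑ m ∈ Finset.range M, aCorr (c k1 m) (c k2 m) N τ =
        if k1 = k2 ∧ τ = 0 then (M * N : ℂ) else 0) :
    ∀ k1 < M, ∀ k2 < M, k1 ≠ k2 → ∀ τ, τ ≤ (M - 1) * N →
      pCorr (Bseq M N c k1) (Bseq M N c k2) (M ^ 2 * N) τ = 0 := by
  intro k1 hk1 k2 hk2 hne τ hτ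
  have hdual : IsCompleteComplementaryCode M N (fun m k => c k m) :=
    IsCompleteComplementaryCode.transpose hCCC
  rw [pCorr_Bseq c hM hN k1 k2 hτ]
  rcases lt_or_ge τ N with hτN | hτN
  · rw [hdual k1 hk1 k2 hk2 τ hτN, if_neg fun h => hne h.1, mul_zero]
  · simp [aCorr_eq_zero_of_le _ _ hτN]
end

section
/- Let x1, x2 be complex sequences of length N1 and y1, y2 be complex sequences of length N2. Then for every shift 0 ≤ τ ≤ N1·N2 − 1, writing τ = k1·N2 + k2 with 0 ≤ k2 ≤ N2−1, the aperiodic cross-correlation of the Kronecker products satisfies C_{x1⊗y1, x2⊗y2}(τ) = C_{x1,x2}(k1) · C_{y1,y2}(k2) + C_{x1,x2}(k1+1) · C_{y1,y2}(k2 − N2), where C_{x1,x2}(N1) is interpreted as 0 and C_{y1,y2}(k2 − N2) denotes the negative-shift value conj(C_{y2,y1}(N2 − k2)) (interpreted as 0 when k2 = 0). -/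
open Finset

/-- Kronecker product of a sequence `x` (length `N1`) with a sequence `y` of length `N2`:
`(x ⊗ y) (k*N2 + l) = x k * y l`. -/
noncomputable def kron (x y : ℕ → ℂ) (N2 : ℕ) : ℕ → ℂ :=
  fun n => x (n / N2) * y (n % N2)

lemma sum_range_mul' (f : ℕ → ℂ) (a b : ℕ) :
    ∑ n ∈ Finset.range (a * b), f n =
      ∑ i ∈ Finset.range a, ∑ j ∈ Finset.range b, f (i * b + j) := by
  induction a with
  | zero => simp
  | succ n ih => rw [Nat.succ_mul, Finset.sum_range_add, ih, Finset.sum_range_succ]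

lemma kron_apply (x y : ℕ → ℂ) {N2 : ℕ} (q : ℕ) {r : ℕ} (h : r < N2) :
    kron x y N2 (q * N2 + r) = x q * y r := by
  have h0 : 0 < N2 := Nat.lt_of_le_of_lt (Nat.zero_le r) h
  unfold kron
  rw [mul_comm q N2, Nat.mul_add_div h0, Nat.mul_add_mod, Nat.div_eq_of_lt h,
    Nat.mod_eq_of_lt h, add_zero]

theorem statement14 (N1 N2 : ℕ) (x1 x2 y1 y2 : ℕ → ℂ)
    (k1 k2 : ℕ) (hk2 : k2 ≤ N2 - 1) (hτ : k1 * N2 + k2 ≤ N1 * N2 - 1) :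
    aCorr (kron x1 y1 N2) (kron x2 y2 N2) (N1 * N2) (k1 * N2 + k2) =
      aCorr x1 x2 N1 k1 * aCorr y1 y2 N2 k2 +
        aCorr x1 x2 N1 (k1 + 1) *
          (starRingEnd ℂ) (aCorr y2 y1 N2 (N2 - k2)) := by
  rcases Nat.eq_zero_or_pos N2 with h2 | h2
  · subst h2; simp [aCorr]
  rcases Nat.eq_zero_or_pos N1 with h1 | h1
  · subst h1; simp [aCorr]
  have hk2' : k2 < N2 := by omega
  have hA : 1 ≤ N1 * N2 := Nat.mul_pos h1 h2
  have hk1 : k1 < N1 := by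
    by_contra h
    push_neg at h
    have h3 : N1 * N2 ≤ k1 * N2 := Nat.mul_le_mul_right N2 h
    omega
  obtain ⟨M, hM⟩ : ∃ M, N1 - k1 = M + 1 := ⟨N1 - k1 - 1, by omega⟩
  -- abbreviations
  set a : ℕ → ℂ := fun q => x1 q * (starRingEnd ℂ) (x2 (q + k1)) with ha
  set c : ℕ → ℂ := fun q => x1 q * (starRingEnd ℂ) (x2 (q + (k1 + 1))) with hc
  set b : ℕ → ℂ := fun j => y1 j * (starRingEnd ℂ) (y2 (j + k2)) with hb
  set d : ℕ → ℂ := fun s => y1 (N2 - k2 + s) * (starRingEnd ℂ) (y2 s) with hd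
  set f : ℕ → ℂ := fun n =>
    kron x1 y1 N2 n * (starRingEnd ℂ) (kron x2 y2 N2 (n + (k1 * N2 + k2))) with hf
  have e2 : N1 * N2 = (M) * N2 + N2 + k1 * N2 := by
    have h4 : N1 = (M) + 1 + k1 := by omega
    calc N1 * N2 = ((M) + 1 + k1) * N2 := by rw [← h4]
      _ = (M) * N2 + N2 + k1 * N2 := by ring
  have e1 : N1 * N2 - (k1 * N2 + k2) = (M) * N2 + (N2 - k2) := by omega
  -- pointwise values
  have hval1 : ∀ q : ℕ, ∀ j < N2 - k2, f (q * N2 + j) = a q * b j := by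
    intro q j hj
    have hjk : j + k2 < N2 := by omega
    have hidx : q * N2 + j + (k1 * N2 + k2) = (q + k1) * N2 + (j + k2) := by ring
    rw [hf]
    simp only
    rw [hidx, kron_apply x1 y1 q (by omega), kron_apply x2 y2 (q + k1) hjk]
    rw [ha, hb]
    simp only [map_mul]
    ring
  have hval2 : ∀ q : ℕ, ∀ s < k2, f (q * N2 + ((N2 - k2) + s)) = c q * d s := by
    intro q s hs
    have hr : N2 - k2 + s < N2 := by omega
    have hidx : q * N2 + (N2 - k2 + s) + (k1 * N2 + k2) = (q + (k1 + 1)) * N2 + s := by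
      have : N2 - k2 + k2 = N2 := by omega
      calc q * N2 + (N2 - k2 + s) + (k1 * N2 + k2)
          = q * N2 + (N2 - k2 + k2) + s + k1 * N2 := by ring
        _ = q * N2 + N2 + s + k1 * N2 := by rw [this]
        _ = (q + (k1 + 1)) * N2 + s := by ring
    rw [hf]
    simp only
    rw [hidx, kron_apply x1 y1 q hr, kron_apply x2 y2 (q + (k1 + 1)) (by omega)]
    rw [hc, hd]
    simp only [map_mul]
    ring
  -- inner sum identity
  have hinner : ∀ q : ℕ, ∑ j ∈ Finset.range N2, f (q * N2 + j) =
      a q * (∑ j ∈ Finset.range (N2 - k2), b j) + c q * (∑ s ∈ Finset.range k2, d s) := by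
    intro q
    have hsplit : N2 = (N2 - k2) + k2 := by omega
    rw [show (Finset.range N2) = Finset.range ((N2 - k2) + k2) from by rw [← hsplit],
      Finset.sum_range_add]
    rw [Finset.sum_congr rfl (fun j hj => hval1 q j (Finset.mem_range.mp hj)),
      Finset.sum_congr rfl (fun s hs => hval2 q s (Finset.mem_range.mp hs)),
      ← Finset.mul_sum, ← Finset.mul_sum]
  -- LHS computation
  have lhs_eq : aCorr (kron x1 y1 N2) (kron x2 y2 N2) (N1 * N2) (k1 * N2 + k2) =
      (∑ q ∈ Finset.range (M + 1), a q) * (∑ j ∈ Finset.range (N2 - k2), b j) +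
      (∑ q ∈ Finset.range (M), c q) * (∑ s ∈ Finset.range k2, d s) := by
    unfold aCorr
    rw [e1, Finset.sum_range_add, sum_range_mul']
    have htail : ∑ s ∈ Finset.range (N2 - k2), f ((M) * N2 + s) =
        a (M) * ∑ j ∈ Finset.range (N2 - k2), b j := by
      rw [Finset.sum_congr rfl
        (fun s hs => hval1 (M) s (Finset.mem_range.mp hs)), ← Finset.mul_sum]
    rw [htail, Finset.sum_congr rfl (fun q _ => hinner q), Finset.sum_add_distrib,
      ← Finset.sum_mul, ← Finset.sum_mul]
    rw [Finset.sum_range_succ, add_mul]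
    abel
  rw [lhs_eq]
  -- RHS computation
  have r1 : aCorr x1 x2 N1 k1 = ∑ q ∈ Finset.range (M + 1), a q := by
    unfold aCorr; rw [hM]
  have r2 : aCorr y1 y2 N2 k2 = ∑ j ∈ Finset.range (N2 - k2), b j := rfl
  have r3 : aCorr x1 x2 N1 (k1 + 1) = ∑ q ∈ Finset.range M, c q := by
    unfold aCorr; rw [show N1 - (k1 + 1) = M from by omega]
  have r4 : (starRingEnd ℂ) (aCorr y2 y1 N2 (N2 - k2)) = ∑ s ∈ Finset.range k2, d s := by
    unfold aCorr
    rw [map_sum]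
    rw [show N2 - (N2 - k2) = k2 from by omega]
    refine Finset.sum_congr rfl (fun s hs => ?_)
    rw [hd]
    simp only [map_mul, RingHom.id_apply, Complex.conj_conj,
      show s + (N2 - k2) = N2 - k2 + s from by omega]
    ring
  rw [r1, r2, r3, r4]
end

section
/- Let 𝔠 = {C^0,…,C^{M−1}} be an (M,M,N1)-complete complementary code with sequences c^m_n of length N1 and 𝔡 = {D^0,…,D^{M−1}} be an (M,M,N2)-complete complementary code with sequences d^l_n of length N2. For 0 ≤ m, l ≤ M−1 define the length-M·N1·N2 sequence e^m_l = (c^m_0 ⊗ d^l_0) ∥ (c^m_1 ⊗ d^l_1) ∥ … ∥ (c^m_{M−1} ⊗ d^l_{M−1}), and let E^m = {e^m_0,…,e^m_{M−1}}. Then 𝔢 = {E^0,…,E^{M−1}} is an (M, M, M·N1·N2)-complete complementary code; that is, for all 0 ≤ m1, m2 ≤ M−1 and 0 ≤ τ ≤ M·N1·N2 − 1, Σ_{l=0}^{M−1} C_{e^{m1}_l, e^{m2}_l}(τ) = M²·N1·N2 if m1 = m2 and τ = 0, and equals 0 otherwise. -/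
open Finset

/-- The length-`M·N1·N2` sequence `e m l = (c m 0 ⊗ d l 0) ∥ (c m 1 ⊗ d l 1) ∥ ⋯`,
whose entry at position `n·N1·N2 + k·N2 + j` is `c m n k * d l n j`. -/
noncomputable def eSeq (N1 N2 : ℕ) (c d : ℕ → ℕ → ℕ → ℂ) (m l : ℕ) : ℕ → ℂ :=
  fun pos =>
    c m (pos / (N1 * N2)) ((pos % (N1 * N2)) / N2) *
      d l (pos / (N1 * N2)) ((pos % (N1 * N2)) % N2)

lemma sum_ite_range {A B : ℕ} (hAB : A ≤ B) (f : ℕ → ℂ) :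
    ∑ q ∈ range B, (if q < A then f q else 0) = ∑ q ∈ range A, f q := by
  rw [← Finset.sum_subset (Finset.range_subset_range.2 hAB)
      (fun x _ hx => by simp [Finset.mem_range] at hx ⊢; omega)]
  exact Finset.sum_congr rfl fun x hx => by simp [Finset.mem_range] at hx; simp [hx]

lemma sum_range_mul_split (A B : ℕ) (f : ℕ → ℂ) :
    ∑ p ∈ range (A * B), f p = ∑ q ∈ range A, ∑ j ∈ range B, f (q * B + j) := by
  induction A with
  | zero => simp
  | succ A ih =>
      rw [Nat.succ_mul, Finset.sum_range_add, ih, Finset.sum_range_succ]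

lemma geom_sum_prim {K : ℕ} {ζ : ℂ} (hζ : IsPrimitiveRoot ζ K) (j : ℕ) :
    ∑ t ∈ range K, ζ ^ (t * j) = if K ∣ j then (K : ℂ) else 0 := by
  by_cases h : K ∣ j
  · simp only [h, if_true]
    have : ∀ t ∈ range K, ζ ^ (t * j) = 1 := fun t _ => by
      rw [mul_comm, pow_mul, (hζ.pow_eq_one_iff_dvd j).2 h, one_pow]
    rw [Finset.sum_congr rfl this]; simp
  · simp only [h, if_false]
    have h1 : ζ ^ j ≠ 1 := fun hh => h ((hζ.pow_eq_one_iff_dvd j).1 hh)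
    have : ∀ t ∈ range K, ζ ^ (t * j) = (ζ ^ j) ^ t := fun t _ => by
      rw [← pow_mul, mul_comm]
    rw [Finset.sum_congr rfl this, geom_sum_eq h1]
    rw [← pow_mul, mul_comm j K, pow_mul, (hζ.pow_eq_one_iff_dvd K).2 dvd_rfl, one_pow]
    simp

lemma coeff_ext {K E : ℕ} (hK : 0 < K) (hE : E ≤ K) {ζ : ℂ} (hζ : IsPrimitiveRoot ζ K)
    (G G' : ℕ → ℂ)
    (h : ∀ t < K, ∑ e ∈ range E, G e * ζ ^ (t * e) = ∑ e ∈ range E, G' e * ζ ^ (t * e)) :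
    ∀ e < E, G e = G' e := by
  intro e0 he0
  have key : ∀ (F : ℕ → ℂ),
      ∑ t ∈ range K, (∑ e ∈ range E, F e * ζ ^ (t * e)) * ζ ^ (t * (K - e0)) =
      (K : ℂ) * F e0 := by
    intro F
    have : ∀ t ∈ range K, (∑ e ∈ range E, F e * ζ ^ (t * e)) * ζ ^ (t * (K - e0)) =
        ∑ e ∈ range E, F e * ζ ^ (t * (e + (K - e0))) := by
      intro t _
      rw [Finset.sum_mul]
      exact Finset.sum_congr rfl fun e _ => by rw [mul_assoc, ← pow_add, ← Nat.mul_add]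
    rw [Finset.sum_congr rfl this, Finset.sum_comm]
    have : ∀ e ∈ range E, ∑ t ∈ range K, F e * ζ ^ (t * (e + (K - e0))) =
        F e * (if K ∣ (e + (K - e0)) then (K : ℂ) else 0) := by
      intro e _
      rw [← Finset.mul_sum, geom_sum_prim hζ]
    rw [Finset.sum_congr rfl this]
    have hd : ∀ e ∈ range E, (K ∣ (e + (K - e0))) ↔ e = e0 := by
      intro e he
      simp only [Finset.mem_range] at he
      constructor
      · intro ⟨q, hq⟩
        have hq1 : 1 ≤ q := Nat.one_le_iff_ne_zero.2 (by rintro rfl; omega)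
        have hq2 : q < 2 := by
          by_contra hc
          push_neg at hc
          have : 2 * K ≤ K * q := by
            calc 2 * K = K * 2 := by ring
              _ ≤ K * q := Nat.mul_le_mul_left _ hc
          omega
        have : q = 1 := by omega
        subst this
        omega
      · rintro rfl
        exact ⟨1, by omega⟩
    calc ∑ e ∈ range E, F e * (if K ∣ (e + (K - e0)) then (K : ℂ) else 0)
        = ∑ e ∈ range E, (if e = e0 then F e * K else 0) := by
          refine Finset.sum_congr rfl fun e he => ?_
          by_cases h' : e = e0
          · subst h'
            rw [if_pos ((hd e he).2 rfl), if_pos rfl]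
          · rw [if_neg (fun hdd => h' ((hd e he).1 hdd)), if_neg h', mul_zero]
      _ = (K : ℂ) * F e0 := by
          rw [Finset.sum_ite_eq' (range E)]
          simp [Finset.mem_range.2 he0, mul_comm]
  have h2 : (K : ℂ) * G e0 = (K : ℂ) * G' e0 := by
    rw [← key G, ← key G']
    exact Finset.sum_congr rfl fun t ht => by rw [h t (Finset.mem_range.1 ht)]
  have hKne : (K : ℂ) ≠ 0 := Nat.cast_ne_zero.2 hK.ne'
  exact mul_left_cancel₀ hKne h2

lemma diag1 (N : ℕ) (f : ℕ → ℕ → ℂ) :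
    ∑ k ∈ range N, ∑ k' ∈ range N, f k k' =
    (∑ τ ∈ range N, ∑ k ∈ range (N - τ), f (k + τ) k) +
      ∑ τ ∈ range N, ∑ k ∈ range (N - (τ + 1)), f k (k + (τ + 1)) := by
  rw [← Finset.sum_product']
  rw [← Finset.sum_filter_add_sum_filter_not (range N ×ˢ range N) (fun p => p.2 ≤ p.1)]
  congr 1
  · rw [← Finset.sum_sigma (range N) (fun τ => range (N - τ)) (fun x => f (x.2 + x.1) x.2)]
    refine Finset.sum_nbij' (fun p => ⟨p.1 - p.2, p.2⟩) (fun x => (x.2 + x.1, x.2)) ?_ ?_ ?_ ?_ ?_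
    · intro p hp
      simp only [Finset.mem_filter, Finset.mem_product, Finset.mem_range] at hp
      simp only [Finset.mem_sigma, Finset.mem_range]
      omega
    · intro x hx
      simp only [Finset.mem_sigma, Finset.mem_range] at hx
      simp only [Finset.mem_filter, Finset.mem_product, Finset.mem_range]
      omega
    · intro p hp
      simp only [Finset.mem_filter, Finset.mem_product, Finset.mem_range] at hp
      have h1 : p.2 + (p.1 - p.2) = p.1 := by omega
      simp [h1]
    · intro x hx
      simp only [Finset.mem_sigma, Finset.mem_range] at hx
      have h1 : x.2 + x.1 - x.2 = x.1 := by omega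
      simp [h1]
    · intro p hp
      simp only [Finset.mem_filter, Finset.mem_product, Finset.mem_range] at hp
      have h1 : p.2 + (p.1 - p.2) = p.1 := by omega
      simp [h1]
  · rw [← Finset.sum_sigma (range N) (fun τ => range (N - (τ + 1))) (fun x => f x.2 (x.2 + (x.1 + 1)))]
    refine Finset.sum_nbij' (fun p => ⟨p.2 - p.1 - 1, p.1⟩) (fun x => (x.2, x.2 + x.1 + 1)) ?_ ?_ ?_ ?_ ?_
    · intro p hp
      simp only [Finset.mem_filter, Finset.mem_product, Finset.mem_range, not_le] at hp
      simp only [Finset.mem_sigma, Finset.mem_range]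
      omega
    · intro x hx
      simp only [Finset.mem_sigma, Finset.mem_range] at hx
      simp only [Finset.mem_filter, Finset.mem_product, Finset.mem_range, not_le]
      omega
    · intro p hp
      simp only [Finset.mem_filter, Finset.mem_product, Finset.mem_range, not_le] at hp
      have h3 : p.1 + (p.2 - p.1 - 1) + 1 = p.2 := by omega
      simp [h3]
    · intro x hx
      simp only [Finset.mem_sigma, Finset.mem_range] at hx
      have h1 : x.2 + x.1 + 1 - x.2 - 1 = x.1 := by omega
      simp [h1]
    · intro p hp
      simp only [Finset.mem_filter, Finset.mem_product, Finset.mem_range, not_le] at hp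
      have h1 : p.2 - p.1 - 1 + 1 = p.2 - p.1 := by omega
      have h2 : p.1 + (p.2 - p.1) = p.2 := by omega
      simp [h1, h2]

lemma expand (M N : ℕ) (P Q : ℕ → ℕ → ℂ) (w : ℂ) :
    ∑ x ∈ range M, (∑ k ∈ range N, P x k * w ^ k) * (∑ k' ∈ range N, Q x k' * w ^ (N - 1 - k')) =
    (∑ τ ∈ range N, (∑ k ∈ range (N - τ), ∑ x ∈ range M, P x (k + τ) * Q x k) * w ^ (τ + (N - 1)))
      + ∑ τ ∈ range N,
        (∑ k ∈ range (N - (τ + 1)), ∑ x ∈ range M, P x k * Q x (k + (τ + 1))) * w ^ (N - (τ + 2)) := by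
  have step1 : ∀ x ∈ range M,
      (∑ k ∈ range N, P x k * w ^ k) * (∑ k' ∈ range N, Q x k' * w ^ (N - 1 - k')) =
      ∑ k ∈ range N, ∑ k' ∈ range N, (P x k * Q x k') * w ^ (k + (N - 1 - k')) := by
    intro x _
    rw [Finset.sum_mul_sum]
    refine Finset.sum_congr rfl fun k _ => Finset.sum_congr rfl fun k' _ => ?_
    rw [pow_add]; ring
  rw [Finset.sum_congr rfl step1, Finset.sum_comm]
  have step2 : ∀ k ∈ range N,
      ∑ x ∈ range M, ∑ k' ∈ range N, (P x k * Q x k') * w ^ (k + (N - 1 - k')) =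
      ∑ k' ∈ range N, (∑ x ∈ range M, P x k * Q x k') * w ^ (k + (N - 1 - k')) := by
    intro k _
    rw [Finset.sum_comm]
    exact Finset.sum_congr rfl fun k' _ => by rw [Finset.sum_mul]
  rw [Finset.sum_congr rfl step2,
    diag1 N (fun k k' => (∑ x ∈ range M, P x k * Q x k') * w ^ (k + (N - 1 - k')))]
  congr 1
  · refine Finset.sum_congr rfl fun τ hτ => ?_
    rw [Finset.sum_mul]
    refine Finset.sum_congr rfl fun k hk => ?_
    simp only [Finset.mem_range] at hτ hk
    have he : k + τ + (N - 1 - k) = τ + (N - 1) := by omega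
    rw [he]
  · refine Finset.sum_congr rfl fun τ hτ => ?_
    rw [Finset.sum_mul]
    refine Finset.sum_congr rfl fun k hk => ?_
    simp only [Finset.mem_range] at hτ hk
    have he : k + (N - 1 - (k + (τ + 1))) = N - (τ + 2) := by omega
    rw [he]

noncomputable def Bmat (M N : ℕ) (d : ℕ → ℕ → ℕ → ℂ) (w : ℂ) : Matrix (Fin M) (Fin M) ℂ :=
  Matrix.of fun l n => ∑ k ∈ range N, d l n k * w ^ k

noncomputable def Cmat (M N : ℕ) (d : ℕ → ℕ → ℕ → ℂ) (w : ℂ) : Matrix (Fin M) (Fin M) ℂ :=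
  Matrix.of fun n l => ∑ k ∈ range N, (starRingEnd ℂ) (d l n k) * w ^ (N - 1 - k)

noncomputable def AcoD (M N : ℕ) (d : ℕ → ℕ → ℕ → ℂ) (n1 n2 τ : ℕ) : ℂ :=
  ∑ k ∈ range (N - τ), ∑ l ∈ range M, d l n1 (k + τ) * (starRingEnd ℂ) (d l n2 k)

noncomputable def BcoD (M N : ℕ) (d : ℕ → ℕ → ℕ → ℂ) (n1 n2 τ : ℕ) : ℂ :=
  ∑ k ∈ range (N - (τ + 1)), ∑ l ∈ range M, d l n1 k * (starRingEnd ℂ) (d l n2 (k + (τ + 1)))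

noncomputable def GD (M N : ℕ) (d : ℕ → ℕ → ℕ → ℂ) (n1 n2 e : ℕ) : ℂ :=
  if N - 1 ≤ e then AcoD M N d n1 n2 (e - (N - 1)) else BcoD M N d n1 n2 (N - 2 - e)

noncomputable def GD' (M N n1 n2 : ℕ) (e : ℕ) : ℂ :=
  if e = N - 1 then (if n1 = n2 then ((M : ℂ) * N) else 0) else 0

lemma entryL (M N : ℕ) (hN : 0 < N) (d : ℕ → ℕ → ℕ → ℂ) (n1 n2 : ℕ)
    (hn1 : n1 < M) (hn2 : n2 < M) (w : ℂ) :
    (Cmat M N d w * Bmat M N d w) ⟨n2, hn2⟩ ⟨n1, hn1⟩ =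
    ∑ e ∈ range (2 * N - 1), GD M N d n1 n2 e * w ^ e := by
  have h1 : (Cmat M N d w * Bmat M N d w) ⟨n2, hn2⟩ ⟨n1, hn1⟩ =
      ∑ m ∈ range M, (∑ k ∈ range N, d m n1 k * w ^ k) *
        (∑ k' ∈ range N, (starRingEnd ℂ) (d m n2 k') * w ^ (N - 1 - k')) := by
    rw [Matrix.mul_apply]
    have h2 : ∑ j : Fin M, Cmat M N d w ⟨n2, hn2⟩ j * Bmat M N d w j ⟨n1, hn1⟩ =
        ∑ m ∈ range M, (∑ k' ∈ range N, (starRingEnd ℂ) (d m n2 k') * w ^ (N - 1 - k')) *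
          (∑ k ∈ range N, d m n1 k * w ^ k) := by
      rw [← Fin.sum_univ_eq_sum_range]
      rfl
    rw [h2]
    exact Finset.sum_congr rfl fun m _ => mul_comm _ _
  rw [h1, expand M N (fun m k => d m n1 k) (fun m k' => (starRingEnd ℂ) (d m n2 k')) w]
  have hsplit : 2 * N - 1 = (N - 1) + N := by omega
  rw [hsplit, Finset.sum_range_add, add_comm]
  have partB : ∑ τ ∈ range N,
      (∑ k ∈ range (N - (τ + 1)), ∑ x ∈ range M,
        d x n1 k * (starRingEnd ℂ) (d x n2 (k + (τ + 1)))) * w ^ (N - (τ + 2)) =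
      ∑ e ∈ range (N - 1), GD M N d n1 n2 e * w ^ e := by
    have hNsucc : N - 1 + 1 = N := by omega
    have hBlast : (∑ k ∈ range (N - ((N - 1) + 1)), ∑ x ∈ range M,
        d x n1 k * (starRingEnd ℂ) (d x n2 (k + ((N - 1) + 1)))) * w ^ (N - ((N - 1) + 2)) = 0 := by
      rw [show N - ((N - 1) + 1) = 0 from by omega]
      simp
    calc ∑ τ ∈ range N,
          (∑ k ∈ range (N - (τ + 1)), ∑ x ∈ range M,
            d x n1 k * (starRingEnd ℂ) (d x n2 (k + (τ + 1)))) * w ^ (N - (τ + 2))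
        = ∑ τ ∈ range ((N - 1) + 1),
          (∑ k ∈ range (N - (τ + 1)), ∑ x ∈ range M,
            d x n1 k * (starRingEnd ℂ) (d x n2 (k + (τ + 1)))) * w ^ (N - (τ + 2)) := by
          rw [hNsucc]
      _ = ∑ τ ∈ range (N - 1),
          (∑ k ∈ range (N - (τ + 1)), ∑ x ∈ range M,
            d x n1 k * (starRingEnd ℂ) (d x n2 (k + (τ + 1)))) * w ^ (N - (τ + 2)) := by
          rw [Finset.sum_range_succ, hBlast, add_zero]
      _ = ∑ e ∈ range (N - 1), GD M N d n1 n2 e * w ^ e := by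
          rw [← Finset.sum_range_reflect (fun e => GD M N d n1 n2 e * w ^ e) (N - 1)]
          refine Finset.sum_congr rfl fun τ hτ => ?_
          simp only [Finset.mem_range] at hτ
          unfold GD BcoD
          rw [if_neg (by omega)]
          have e1 : N - 2 - (N - 1 - 1 - τ) = τ := by omega
          have e2 : N - 1 - 1 - τ = N - (τ + 2) := by omega
          rw [e1, e2]
  have partA : ∑ τ ∈ range N,
      (∑ k ∈ range (N - τ), ∑ x ∈ range M,
        d x n1 (k + τ) * (starRingEnd ℂ) (d x n2 k)) * w ^ (τ + (N - 1)) =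
      ∑ i ∈ range N, GD M N d n1 n2 ((N - 1) + i) * w ^ ((N - 1) + i) := by
    refine Finset.sum_congr rfl fun i hi => ?_
    unfold GD AcoD
    rw [if_pos (by omega), show (N - 1) + i - (N - 1) = i from by omega, add_comm i (N - 1)]
  rw [partA, partB]
lemma entryR (M N : ℕ) (hN : 0 < N) (n1 n2 : ℕ) (hn1 : n1 < M) (hn2 : n2 < M) (w : ℂ) :
    ((((M : ℂ) * N) * w ^ (N - 1)) • (1 : Matrix (Fin M) (Fin M) ℂ)) ⟨n2, hn2⟩ ⟨n1, hn1⟩ =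
    ∑ e ∈ range (2 * N - 1), GD' M N n1 n2 e * w ^ e := by
  rw [Matrix.smul_apply, Matrix.one_apply]
  rw [Finset.sum_eq_single_of_mem (N - 1) (Finset.mem_range.2 (by omega))
    (fun e _ hne => by unfold GD'; rw [if_neg hne, zero_mul])]
  unfold GD'
  rw [if_pos rfl]
  by_cases h : n1 = n2
  · subst h
    rw [if_pos rfl, if_pos (by rfl), smul_eq_mul, mul_one]
  · rw [if_neg h, if_neg (by simp [Fin.mk.injEq]; omega), smul_eq_mul, mul_zero, zero_mul]

lemma ccc_transpose (M N : ℕ) (hM : 0 < M) (hN : 0 < N) (d : ℕ → ℕ → ℕ → ℂ)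
    (hCCC : ∀ l1 < M, ∀ l2 < M, ∀ τ < N,
      ∑ n ∈ range M, aCorr (d l1 n) (d l2 n) N τ = if l1 = l2 ∧ τ = 0 then (M * N : ℂ) else 0) :
    ∀ n1 < M, ∀ n2 < M, ∀ τ < N,
      ∑ l ∈ range M, aCorr (d l n1) (d l n2) N τ = if n1 = n2 ∧ τ = 0 then (M * N : ℂ) else 0 := by
  have hMNne : ((M : ℂ) * N) ≠ 0 :=
    mul_ne_zero (Nat.cast_ne_zero.2 hM.ne') (Nat.cast_ne_zero.2 hN.ne')
  -- Claim A : B(w) * C(w) = (M*N*w^(N-1)) • 1 for every w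
  have claimA : ∀ w : ℂ, Bmat M N d w * Cmat M N d w = (((M : ℂ) * N) * w ^ (N - 1)) • 1 := by
    intro w
    ext l1 l2
    rw [Matrix.mul_apply]
    have hL : ∑ j : Fin M, Bmat M N d w l1 j * Cmat M N d w j l2 =
        ∑ m ∈ range M, (∑ k ∈ range N, d l1 m k * w ^ k) *
          (∑ k' ∈ range N, (starRingEnd ℂ) (d l2 m k') * w ^ (N - 1 - k')) := by
      rw [← Fin.sum_univ_eq_sum_range]
      rfl
    rw [hL, expand M N (fun m k => d l1 m k) (fun m k' => (starRingEnd ℂ) (d l2 m k')) w]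
    -- part 2 vanishes
    have hpart2 : ∀ τ ∈ range N,
        (∑ k ∈ range (N - (τ + 1)), ∑ x ∈ range M,
          d l1 x k * (starRingEnd ℂ) (d l2 x (k + (τ + 1)))) * w ^ (N - (τ + 2)) = 0 := by
      intro τ _
      by_cases hτ : τ + 1 < N
      · have : ∑ k ∈ range (N - (τ + 1)), ∑ x ∈ range M,
            d l1 x k * (starRingEnd ℂ) (d l2 x (k + (τ + 1))) =
            ∑ x ∈ range M, aCorr (d l1 x) (d l2 x) N (τ + 1) := by
          rw [Finset.sum_comm]
          rfl
        rw [this, hCCC l1 l1.isLt l2 l2.isLt (τ + 1) hτ, if_neg (by omega), zero_mul]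
      · have : N - (τ + 1) = 0 := by omega
        rw [this]
        simp
    rw [Finset.sum_congr rfl hpart2, Finset.sum_const, smul_zero, add_zero]
    -- part 1
    have hpart1 : ∀ τ ∈ range N,
        (∑ k ∈ range (N - τ), ∑ x ∈ range M,
          d l1 x (k + τ) * (starRingEnd ℂ) (d l2 x k)) * w ^ (τ + (N - 1)) =
        (if τ = 0 then (if (l2 : ℕ) = (l1 : ℕ) then ((M : ℂ) * N) else 0) * w ^ (N - 1) else 0) := by
      intro τ hτ
      have hflip : ∑ k ∈ range (N - τ), ∑ x ∈ range M,
          d l1 x (k + τ) * (starRingEnd ℂ) (d l2 x k) =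
          (starRingEnd ℂ) (∑ x ∈ range M, aCorr (d l2 x) (d l1 x) N τ) := by
        rw [map_sum, Finset.sum_comm]
        refine Finset.sum_congr rfl fun x _ => ?_
        unfold aCorr
        rw [map_sum]
        refine Finset.sum_congr rfl fun k _ => ?_
        rw [map_mul, Complex.conj_conj, mul_comm]
      rw [hflip, hCCC l2 l2.isLt l1 l1.isLt τ (Finset.mem_range.1 hτ)]
      by_cases hτ0 : τ = 0
      · subst hτ0
        by_cases hll : (l2 : ℕ) = (l1 : ℕ)
        · simp [hll]
        · simp [hll]
      · simp [hτ0]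
    rw [Finset.sum_congr rfl hpart1, Finset.sum_ite_eq' (range N) 0]
    rw [if_pos (Finset.mem_range.2 hN)]
    have : ((l1 : Fin M) = l2) ↔ ((l2 : ℕ) = (l1 : ℕ)) := by
      rw [Fin.ext_iff]; omega
    by_cases hll : (l2 : ℕ) = (l1 : ℕ)
    · rw [if_pos hll, Matrix.smul_apply, Matrix.one_apply, if_pos (this.2 hll), smul_eq_mul, mul_one]
    · rw [if_neg hll, Matrix.smul_apply, Matrix.one_apply, if_neg (fun h => hll (this.1 h)),
        smul_eq_mul, mul_zero, zero_mul]
  -- Claim B : C(w) * B(w) = (M*N*w^(N-1)) • 1 for every w ≠ 0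
  have claimB : ∀ w : ℂ, w ≠ 0 →
      Cmat M N d w * Bmat M N d w = (((M : ℂ) * N) * w ^ (N - 1)) • 1 := by
    intro w hw
    have hs : ((M : ℂ) * N) * w ^ (N - 1) ≠ 0 := mul_ne_zero hMNne (pow_ne_zero _ hw)
    have h1 : Bmat M N d w * ((((M : ℂ) * N) * w ^ (N - 1))⁻¹ • Cmat M N d w) = 1 := by
      rw [Matrix.mul_smul, claimA w, smul_smul, inv_mul_cancel₀ hs, one_smul]
    have h2 := mul_eq_one_comm.mp h1
    rw [Matrix.smul_mul] at h2
    calc Cmat M N d w * Bmat M N d w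
        = (((M : ℂ) * N) * w ^ (N - 1)) •
            ((((M : ℂ) * N) * w ^ (N - 1))⁻¹ • (Cmat M N d w * Bmat M N d w)) := by
          rw [smul_smul, mul_inv_cancel₀ hs, one_smul]
      _ = (((M : ℂ) * N) * w ^ (N - 1)) • (1 : Matrix (Fin M) (Fin M) ℂ) := by rw [h2]
  intro n1 hn1 n2 hn2 τ0 hτ0
  have hN2 : (2 * N : ℕ) ≠ 0 := by omega
  obtain ⟨ζ, hζ, hζ0⟩ : ∃ ζ : ℂ, IsPrimitiveRoot ζ (2 * N) ∧ ζ ≠ 0 :=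
    ⟨_, Complex.isPrimitiveRoot_exp (2 * N) hN2, Complex.exp_ne_zero _⟩
  have hGG : ∀ e < 2 * N - 1, GD M N d n1 n2 e = GD' M N n1 n2 e := by
    refine coeff_ext (by omega) (by omega) hζ _ _ ?_
    intro t ht
    have hwne : ζ ^ t ≠ 0 := pow_ne_zero _ hζ0
    have hcb := claimB (ζ ^ t) hwne
    have h3 : (Cmat M N d (ζ ^ t) * Bmat M N d (ζ ^ t)) ⟨n2, hn2⟩ ⟨n1, hn1⟩ =
        ((((M : ℂ) * N) * (ζ ^ t) ^ (N - 1)) • (1 : Matrix (Fin M) (Fin M) ℂ)) ⟨n2, hn2⟩ ⟨n1, hn1⟩ := by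
      rw [hcb]
    rw [entryL M N hN d n1 n2 hn1 hn2 (ζ ^ t), entryR M N hN n1 n2 hn1 hn2 (ζ ^ t)] at h3
    simpa only [pow_mul] using h3
  by_cases hτ0' : τ0 = 0
  · subst hτ0'
    have target_eq : ∑ l ∈ range M, aCorr (d l n1) (d l n2) N 0 = AcoD M N d n1 n2 0 := by
      unfold aCorr AcoD
      rw [Finset.sum_comm]
      simp
    have hG : AcoD M N d n1 n2 0 = GD M N d n1 n2 (N - 1) := by
      unfold GD
      rw [if_pos le_rfl, Nat.sub_self]
    rw [target_eq, hG, hGG (N - 1) (by omega)]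
    unfold GD'
    rw [if_pos rfl]
    simp
  · have target_eq : ∑ l ∈ range M, aCorr (d l n1) (d l n2) N τ0 = BcoD M N d n1 n2 (τ0 - 1) := by
      unfold aCorr BcoD
      rw [Finset.sum_comm, show τ0 - 1 + 1 = τ0 from by omega]
    have hG : BcoD M N d n1 n2 (τ0 - 1) = GD M N d n1 n2 (N - 1 - τ0) := by
      unfold GD
      rw [if_neg (by omega), show N - 2 - (N - 1 - τ0) = τ0 - 1 from by omega]
    rw [target_eq, hG, hGG (N - 1 - τ0) (by omega)]
    unfold GD'
    rw [if_neg (by omega), if_neg (by simp [hτ0'])]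

lemma block_lt_iff {N2 : ℕ} {A q r : ℕ} (hr : r < N2) : q * N2 + r < A * N2 ↔ q < A := by
  constructor
  · intro h
    by_contra hc
    push_neg at hc
    have : A * N2 ≤ q * N2 := Nat.mul_le_mul_right _ hc
    omega
  · intro h
    have h1 : (q + 1) * N2 ≤ A * N2 := Nat.mul_le_mul_right _ h
    have h2 : (q + 1) * N2 = q * N2 + N2 := by ring
    omega

lemma div_eq_div_add_iff {N1 : ℕ} (hN1 : 0 < N1) (q σ : ℕ) :
    q / N1 = (q + σ) / N1 ↔ q % N1 + σ < N1 := by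
  have hq := Nat.div_add_mod q N1
  have h2 : (q + σ) / N1 = q / N1 + (q % N1 + σ) / N1 := by
    conv_lhs => rw [← hq]
    rw [add_assoc, Nat.mul_add_div hN1]
  rw [h2]
  constructor
  · intro h
    have h3 : (q % N1 + σ) / N1 = 0 := by omega
    have h4 := Nat.div_add_mod (q % N1 + σ) N1
    rw [h3, Nat.mul_zero, Nat.zero_add] at h4
    have h5 : (q % N1 + σ) % N1 < N1 := Nat.mod_lt _ hN1
    omega
  · intro h
    rw [Nat.div_eq_of_lt h, add_zero]

lemma cond_iff {M N1 : ℕ} (hN1 : 0 < N1) (σ q : ℕ) (hq : q < M * N1) :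
    (q < M * N1 - σ ∧ q / N1 = (q + σ) / N1) ↔ q % N1 + σ < N1 := by
  rw [div_eq_div_add_iff hN1]
  constructor
  · exact fun h => h.2
  · intro h
    refine ⟨?_, h⟩
    have ha : q / N1 < M := by
      rw [Nat.div_lt_iff_lt_mul hN1, mul_comm M N1] at *
      omega
    have hqd := Nat.div_add_mod q N1
    have h1 : N1 * (q / N1 + 1) ≤ N1 * M := Nat.mul_le_mul_left _ (by omega)
    have h2 : N1 * (q / N1 + 1) = N1 * (q / N1) + N1 := by ring
    have h3 : N1 * M = M * N1 := mul_comm _ _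
    omega

lemma decomp {N1 N2 : ℕ} (hN1 : 0 < N1) (hN2 : 0 < N2) (q j : ℕ) (hj : j < N2) :
    (q * N2 + j) / (N1 * N2) = q / N1 ∧ ((q * N2 + j) % (N1 * N2)) / N2 = q % N1 ∧
      ((q * N2 + j) % (N1 * N2)) % N2 = j := by
  have h1 : (q * N2 + j) / N2 = q := by
    rw [add_comm, Nat.add_mul_div_right _ _ hN2, Nat.div_eq_of_lt hj, zero_add]
  have h2 : (q * N2 + j) % N2 = j := by
    rw [add_comm, Nat.add_mul_mod_self_right, Nat.mod_eq_of_lt hj]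
  refine ⟨?_, ?_, ?_⟩
  · rw [mul_comm N1 N2, ← Nat.div_div_eq_div_mul, h1]
  · rw [mul_comm N1 N2, Nat.mod_mul_right_div_self, h1]
  · rw [Nat.mod_mod_of_dvd _ ⟨N1, by ring⟩, h2]

noncomputable def Fq (N1 N2 : ℕ) (c d : ℕ → ℕ → ℕ → ℂ) (M m1 m2 τ : ℕ) (p : ℕ) : ℂ :=
  (c m1 (p / (N1 * N2)) ((p % (N1 * N2)) / N2) *
    (starRingEnd ℂ) (c m2 ((p + τ) / (N1 * N2)) (((p + τ) % (N1 * N2)) / N2))) *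
  ∑ l ∈ range M, d l (p / (N1 * N2)) ((p % (N1 * N2)) % N2) *
    (starRingEnd ℂ) (d l ((p + τ) / (N1 * N2)) (((p + τ) % (N1 * N2)) % N2))


theorem statement16 (M N1 N2 : ℕ) (hM : 0 < M) (hN1 : 0 < N1) (hN2 : 0 < N2)
    (c d : ℕ → ℕ → ℕ → ℂ)
    (hCCCc : ∀ m1 < M, ∀ m2 < M, ∀ τ < N1,
      ∑ n ∈ Finset.range M, aCorr (c m1 n) (c m2 n) N1 τ =
        if m1 = m2 ∧ τ = 0 then (M * N1 : ℂ) else 0)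
    (hCCCd : ∀ l1 < M, ∀ l2 < M, ∀ τ < N2,
      ∑ n ∈ Finset.range M, aCorr (d l1 n) (d l2 n) N2 τ =
        if l1 = l2 ∧ τ = 0 then (M * N2 : ℂ) else 0) :
    ∀ m1 < M, ∀ m2 < M, ∀ τ < M * N1 * N2,
      ∑ l ∈ Finset.range M,
        aCorr (eSeq N1 N2 c d m1 l) (eSeq N1 N2 c d m2 l) (M * N1 * N2) τ =
        if m1 = m2 ∧ τ = 0 then (M ^ 2 * N1 * N2 : ℂ) else 0 := by
  intro m1 hm1 m2 hm2 τ hτ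
  have hT := ccc_transpose M N2 hM hN2 d hCCCd
  have hτ2lt : τ % N2 < N2 := Nat.mod_lt _ hN2
  have hτeq : N2 * (τ / N2) + τ % N2 = τ := Nat.div_add_mod τ N2
  have hσlt : τ / N2 < M * N1 := by
    rw [Nat.div_lt_iff_lt_mul hN2]
    exact hτ
  -- Step 1 : swap sums and factor out the c-part
  have step1 : ∑ l ∈ range M,
      aCorr (eSeq N1 N2 c d m1 l) (eSeq N1 N2 c d m2 l) (M * N1 * N2) τ =
      ∑ p ∈ range (M * N1 * N2 - τ), Fq N1 N2 c d M m1 m2 τ p := by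
    unfold aCorr
    rw [Finset.sum_comm]
    refine Finset.sum_congr rfl fun p _ => ?_
    unfold Fq eSeq
    rw [Finset.mul_sum]
    refine Finset.sum_congr rfl fun l _ => ?_
    rw [map_mul]
    ring
  rw [step1]
  -- Step 2 : reindex positions as q*N2 + j
  have step2 : ∑ p ∈ range (M * N1 * N2 - τ), Fq N1 N2 c d M m1 m2 τ p =
      ∑ q ∈ range (M * N1), ∑ j ∈ range N2,
        (if q * N2 + j < M * N1 * N2 - τ then Fq N1 N2 c d M m1 m2 τ (q * N2 + j) else 0) := by
    rw [← sum_ite_range (Nat.sub_le _ _) (Fq N1 N2 c d M m1 m2 τ), sum_range_mul_split]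
  rw [step2]
  -- Step 3 : evaluate the inner sum for each q
  have step3 : ∀ q ∈ range (M * N1),
      ∑ j ∈ range N2,
        (if q * N2 + j < M * N1 * N2 - τ then Fq N1 N2 c d M m1 m2 τ (q * N2 + j) else 0) =
      (if q < M * N1 - τ / N2 then
        (c m1 (q / N1) (q % N1) *
          (starRingEnd ℂ) (c m2 ((q + τ / N2) / N1) ((q + τ / N2) % N1))) *
          (if (q / N1 = (q + τ / N2) / N1) ∧ τ % N2 = 0 then ((M : ℂ) * N2) else 0)
       else 0) := by
    intro q hq
    rw [Finset.mem_range] at hq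
    have hsplit : ∑ j ∈ range N2,
        (if q * N2 + j < M * N1 * N2 - τ then Fq N1 N2 c d M m1 m2 τ (q * N2 + j) else 0) =
        ∑ j ∈ range ((N2 - τ % N2) + τ % N2),
        (if q * N2 + j < M * N1 * N2 - τ then Fq N1 N2 c d M m1 m2 τ (q * N2 + j) else 0) := by
      rw [show (N2 - τ % N2) + τ % N2 = N2 from by omega]
    rw [hsplit, Finset.sum_range_add]
    -- the no-carry part
    have hA : ∑ j ∈ range (N2 - τ % N2),
        (if q * N2 + j < M * N1 * N2 - τ then Fq N1 N2 c d M m1 m2 τ (q * N2 + j) else 0) =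
        (if q < M * N1 - τ / N2 then
          (c m1 (q / N1) (q % N1) *
            (starRingEnd ℂ) (c m2 ((q + τ / N2) / N1) ((q + τ / N2) % N1))) *
            (∑ j ∈ range (N2 - τ % N2), ∑ l ∈ range M,
              d l (q / N1) j * (starRingEnd ℂ) (d l ((q + τ / N2) / N1) (j + τ % N2)))
         else 0) := by
      have hterm : ∀ j ∈ range (N2 - τ % N2),
          (if q * N2 + j < M * N1 * N2 - τ then Fq N1 N2 c d M m1 m2 τ (q * N2 + j) else 0) =
          (if q < M * N1 - τ / N2 then
            (c m1 (q / N1) (q % N1) *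
              (starRingEnd ℂ) (c m2 ((q + τ / N2) / N1) ((q + τ / N2) % N1))) *
            (∑ l ∈ range M,
              d l (q / N1) j * (starRingEnd ℂ) (d l ((q + τ / N2) / N1) (j + τ % N2)))
           else 0) := by
        intro j hj
        rw [Finset.mem_range] at hj
        have hjN2 : j < N2 := by omega
        have hpτ : q * N2 + j + τ = (q + τ / N2) * N2 + (j + τ % N2) := by
          have h5 : (q + τ / N2) * N2 = q * N2 + N2 * (τ / N2) := by ring
          omega
        have hcond : (q * N2 + j < M * N1 * N2 - τ) ↔ q < M * N1 - τ / N2 := by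
          have h1 : q * N2 + j < M * N1 * N2 - τ ↔ q * N2 + j + τ < M * N1 * N2 := by omega
          rw [h1, hpτ, block_lt_iff (by omega)]
          omega
        have hFq : Fq N1 N2 c d M m1 m2 τ (q * N2 + j) =
            (c m1 (q / N1) (q % N1) *
              (starRingEnd ℂ) (c m2 ((q + τ / N2) / N1) ((q + τ / N2) % N1))) *
            (∑ l ∈ range M,
              d l (q / N1) j * (starRingEnd ℂ) (d l ((q + τ / N2) / N1) (j + τ % N2))) := by
          unfold Fq
          obtain ⟨e1, e2, e3⟩ := decomp hN1 hN2 q j hjN2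
          obtain ⟨f1, f2, f3⟩ := decomp hN1 hN2 (q + τ / N2) (j + τ % N2) (by omega)
          rw [hpτ, e1, e2, e3, f1, f2, f3]
        rw [hFq]
        by_cases hc : q < M * N1 - τ / N2
        · rw [if_pos (hcond.2 hc), if_pos hc]
        · rw [if_neg (fun h => hc (hcond.1 h)), if_neg hc]
      rw [Finset.sum_congr rfl hterm]
      by_cases hc : q < M * N1 - τ / N2
      · simp only [if_pos hc, ← Finset.mul_sum]
      · simp only [if_neg hc, Finset.sum_const, smul_zero]
    -- the carry part vanishes
    have hB : ∑ j ∈ range (τ % N2),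
        (if q * N2 + ((N2 - τ % N2) + j) < M * N1 * N2 - τ then
          Fq N1 N2 c d M m1 m2 τ (q * N2 + ((N2 - τ % N2) + j)) else 0) = 0 := by
      by_cases hτ20 : τ % N2 = 0
      · rw [hτ20]
        simp
      · have hterm : ∀ j ∈ range (τ % N2),
            (if q * N2 + ((N2 - τ % N2) + j) < M * N1 * N2 - τ then
              Fq N1 N2 c d M m1 m2 τ (q * N2 + ((N2 - τ % N2) + j)) else 0) =
            (if q < M * N1 - τ / N2 - 1 then
              (c m1 (q / N1) (q % N1) *
                (starRingEnd ℂ) (c m2 ((q + τ / N2 + 1) / N1) ((q + τ / N2 + 1) % N1))) *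
              (∑ l ∈ range M,
                d l (q / N1) (N2 - τ % N2 + j) *
                  (starRingEnd ℂ) (d l ((q + τ / N2 + 1) / N1) j))
             else 0) := by
          intro j hj
          rw [Finset.mem_range] at hj
          have hjN2 : (N2 - τ % N2) + j < N2 := by omega
          have hpτ : q * N2 + ((N2 - τ % N2) + j) + τ = (q + τ / N2 + 1) * N2 + j := by
            have h5 : (q + τ / N2 + 1) * N2 = q * N2 + N2 * (τ / N2) + N2 := by ring
            omega
          have hcond : (q * N2 + ((N2 - τ % N2) + j) < M * N1 * N2 - τ) ↔
              q < M * N1 - τ / N2 - 1 := by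
            have h1 : q * N2 + ((N2 - τ % N2) + j) < M * N1 * N2 - τ ↔
                q * N2 + ((N2 - τ % N2) + j) + τ < M * N1 * N2 := by omega
            rw [h1, hpτ, block_lt_iff (by omega)]
            omega
          have hFq : Fq N1 N2 c d M m1 m2 τ (q * N2 + ((N2 - τ % N2) + j)) =
              (c m1 (q / N1) (q % N1) *
                (starRingEnd ℂ) (c m2 ((q + τ / N2 + 1) / N1) ((q + τ / N2 + 1) % N1))) *
              (∑ l ∈ range M,
                d l (q / N1) (N2 - τ % N2 + j) *
                  (starRingEnd ℂ) (d l ((q + τ / N2 + 1) / N1) j)) := by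
            unfold Fq
            obtain ⟨e1, e2, e3⟩ := decomp hN1 hN2 q ((N2 - τ % N2) + j) hjN2
            obtain ⟨f1, f2, f3⟩ := decomp hN1 hN2 (q + τ / N2 + 1) j (by omega)
            rw [hpτ, e1, e2, e3, f1, f2, f3]
          rw [hFq]
          by_cases hc : q < M * N1 - τ / N2 - 1
          · rw [if_pos (hcond.2 hc), if_pos hc]
          · rw [if_neg (fun h => hc (hcond.1 h)), if_neg hc]
        rw [Finset.sum_congr rfl hterm]
        by_cases hc : q < M * N1 - τ / N2 - 1
        · simp only [if_pos hc, ← Finset.mul_sum]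
          have hzero : ∑ j ∈ range (τ % N2), ∑ l ∈ range M,
              d l (q / N1) (N2 - τ % N2 + j) *
                (starRingEnd ℂ) (d l ((q + τ / N2 + 1) / N1) j) = 0 := by
            have hflip : ∑ j ∈ range (τ % N2), ∑ l ∈ range M,
                d l (q / N1) (N2 - τ % N2 + j) *
                  (starRingEnd ℂ) (d l ((q + τ / N2 + 1) / N1) j) =
                (starRingEnd ℂ) (∑ l ∈ range M,
                  aCorr (d l ((q + τ / N2 + 1) / N1)) (d l (q / N1)) N2 (N2 - τ % N2)) := by
              rw [map_sum, Finset.sum_comm]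
              refine Finset.sum_congr rfl fun l _ => ?_
              unfold aCorr
              rw [map_sum, show N2 - (N2 - τ % N2) = τ % N2 from by omega]
              refine Finset.sum_congr rfl fun k _ => ?_
              rw [map_mul, Complex.conj_conj, mul_comm, add_comm k (N2 - τ % N2)]
            rw [hflip, hT ((q + τ / N2 + 1) / N1)
              (by rw [Nat.div_lt_iff_lt_mul hN1, mul_comm M N1] at *; omega)
              (q / N1) (by rw [Nat.div_lt_iff_lt_mul hN1, mul_comm M N1] at *; omega)
              (N2 - τ % N2) (by omega), if_neg (by omega), map_zero]
          rw [hzero, mul_zero]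
        · simp only [if_neg hc, Finset.sum_const, smul_zero]
    rw [hA, hB, add_zero]
    by_cases hc : q < M * N1 - τ / N2
    · rw [if_pos hc, if_pos hc]
      congr 1
      have hdsum : ∑ j ∈ range (N2 - τ % N2), ∑ l ∈ range M,
          d l (q / N1) j * (starRingEnd ℂ) (d l ((q + τ / N2) / N1) (j + τ % N2)) =
          ∑ l ∈ range M, aCorr (d l (q / N1)) (d l ((q + τ / N2) / N1)) N2 (τ % N2) := by
        rw [Finset.sum_comm]
        rfl
      rw [hdsum, hT (q / N1) (by rw [Nat.div_lt_iff_lt_mul hN1, mul_comm M N1] at *; omega)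
        ((q + τ / N2) / N1) (by rw [Nat.div_lt_iff_lt_mul hN1, mul_comm M N1] at *; omega)
        (τ % N2) hτ2lt]
    · rw [if_neg hc, if_neg hc]
  rw [Finset.sum_congr rfl step3]
  -- Step 4 : case on whether τ is a multiple of N2
  by_cases hτ2 : τ % N2 = 0
  · -- τ2 = 0
    have step4 : ∀ q ∈ range (M * N1),
        (if q < M * N1 - τ / N2 then
          (c m1 (q / N1) (q % N1) *
            (starRingEnd ℂ) (c m2 ((q + τ / N2) / N1) ((q + τ / N2) % N1))) *
            (if (q / N1 = (q + τ / N2) / N1) ∧ τ % N2 = 0 then ((M : ℂ) * N2) else 0)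
         else 0) =
        (if q % N1 + τ / N2 < N1 then
          (c m1 (q / N1) (q % N1) * (starRingEnd ℂ) (c m2 (q / N1) (q % N1 + τ / N2))) *
            ((M : ℂ) * N2)
         else 0) := by
      intro q hq
      rw [Finset.mem_range] at hq
      by_cases h1 : q % N1 + τ / N2 < N1
      · obtain ⟨hc1, hc2⟩ := (cond_iff hN1 (τ / N2) q hq).2 h1
        have hmod : (q + τ / N2) % N1 = q % N1 + τ / N2 := by
          have hd := Nat.div_add_mod q N1
          have h6 : q + τ / N2 = N1 * (q / N1) + (q % N1 + τ / N2) := by omega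
          rw [h6, Nat.mul_add_mod, Nat.mod_eq_of_lt h1]
        rw [if_pos hc1, if_pos ⟨hc2, hτ2⟩, if_pos h1, ← hc2, hmod]
      · by_cases h2 : q < M * N1 - τ / N2
        · rw [if_pos h2, if_neg (fun hh => h1 ((cond_iff hN1 (τ / N2) q hq).1 ⟨h2, hh.1⟩)),
            mul_zero, if_neg h1]
        · rw [if_neg h2, if_neg h1]
    rw [Finset.sum_congr rfl step4, sum_range_mul_split]
    have step5 : ∀ n ∈ range M, ∀ k ∈ range N1,
        (if (n * N1 + k) % N1 + τ / N2 < N1 then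
          (c m1 ((n * N1 + k) / N1) ((n * N1 + k) % N1) *
            (starRingEnd ℂ) (c m2 ((n * N1 + k) / N1) ((n * N1 + k) % N1 + τ / N2))) *
            ((M : ℂ) * N2)
         else 0) =
        (if k < N1 - τ / N2 then
          (c m1 n k * (starRingEnd ℂ) (c m2 n (k + τ / N2))) * ((M : ℂ) * N2) else 0) := by
      intro n hn k hk
      rw [Finset.mem_range] at hk
      have g1 : (n * N1 + k) / N1 = n := by
        rw [add_comm, Nat.add_mul_div_right _ _ hN1, Nat.div_eq_of_lt hk, zero_add]
      have g2 : (n * N1 + k) % N1 = k := by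
        rw [add_comm, Nat.add_mul_mod_self_right, Nat.mod_eq_of_lt hk]
      rw [g1, g2]
      by_cases h1 : k + τ / N2 < N1
      · rw [if_pos h1, if_pos (by omega)]
      · rw [if_neg h1, if_neg (by omega)]
    rw [Finset.sum_congr rfl fun n hn => Finset.sum_congr rfl (step5 n hn)]
    by_cases hσN : τ / N2 < N1
    · have step6 : ∀ n ∈ range M,
          ∑ k ∈ range N1, (if k < N1 - τ / N2 then
            (c m1 n k * (starRingEnd ℂ) (c m2 n (k + τ / N2))) * ((M : ℂ) * N2) else 0) =
          aCorr (c m1 n) (c m2 n) N1 (τ / N2) * ((M : ℂ) * N2) := by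
        intro n hn
        rw [sum_ite_range (A := N1 - τ / N2) (B := N1) (Nat.sub_le _ _)
          (fun k => (c m1 n k * (starRingEnd ℂ) (c m2 n (k + τ / N2))) * ((M : ℂ) * N2))]
        rw [← Finset.sum_mul]
        rfl
      rw [Finset.sum_congr rfl step6, ← Finset.sum_mul,
        hCCCc m1 hm1 m2 hm2 (τ / N2) hσN]
      have hτ0 : τ = 0 ↔ τ / N2 = 0 := by
        constructor
        · intro h; rw [h]; exact Nat.zero_div _
        · intro h
          have h7 : N2 * (τ / N2) = 0 := by rw [h, Nat.mul_zero]
          omega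
      by_cases hm : m1 = m2 ∧ τ = 0
      · rw [if_pos ⟨hm.1, hτ0.1 hm.2⟩, if_pos hm]
        push_cast
        ring
      · have hnotdiv : ¬(m1 = m2 ∧ τ / N2 = 0) := by
          rintro ⟨ha, hb⟩
          have h7 : N2 * (τ / N2) = 0 := by rw [hb, Nat.mul_zero]
          exact hm ⟨ha, by omega⟩
        rw [if_neg hnotdiv, if_neg hm, zero_mul]
    · have step6 : ∀ n ∈ range M,
          ∑ k ∈ range N1, (if k < N1 - τ / N2 then
            (c m1 n k * (starRingEnd ℂ) (c m2 n (k + τ / N2))) * ((M : ℂ) * N2) else 0) = 0 := by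
        intro n hn
        refine Finset.sum_eq_zero fun k hk => ?_
        rw [if_neg (by omega)]
      rw [Finset.sum_congr rfl step6, Finset.sum_const, smul_zero,
        if_neg (fun h => hσN (by rw [h.2, Nat.zero_div]; omega))]
  · -- τ2 ≠ 0 : everything vanishes
    have step4 : ∀ q ∈ range (M * N1),
        (if q < M * N1 - τ / N2 then
          (c m1 (q / N1) (q % N1) *
            (starRingEnd ℂ) (c m2 ((q + τ / N2) / N1) ((q + τ / N2) % N1))) *
            (if (q / N1 = (q + τ / N2) / N1) ∧ τ % N2 = 0 then ((M : ℂ) * N2) else 0)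
         else 0) = 0 := by
      intro q _
      have hz : (if (q / N1 = (q + τ / N2) / N1) ∧ τ % N2 = 0 then ((M : ℂ) * N2) else 0) = 0 :=
        if_neg (fun h => hτ2 h.2)
      rw [hz, mul_zero, ite_self]
    rw [Finset.sum_congr rfl step4, Finset.sum_const, smul_zero,
      if_neg (fun h => hτ2 (by rw [h.2]; simp))]
end
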